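/- arXiv:1006.5189 — 2 statements merged into one kernel-verified Lean document; each statement's English description precedes it below -/
import Mathlib

section
/- Let {Q_j} be a family of closed cubes in ℝ^d with pairwise disjoint interiors whose union is dense in ℝ^d, and suppose there exist C, β > 0 such that whenever the (1+β)⁴-dilates Q_i**** and Q_j**** intersect, then d(Q_i) ≤ C d(Q_j). Then there exists a constant C' such that Σ_j 1_{Q_j****}(x) ≤ C' for every x ∈ ℝ^d, i.e. the dilated cubes have bounded overlap. -/
open MeasureTheory Real Set
open scoped ENNReal

/-!
Fix `x` and one cube `Q_{j₀}` whose dilate contains `x`. By the comparability hypothesis every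
cube whose dilate contains `x` has radius between `r j₀ / C` and `C * r j₀`, so it lies in the
cube of radius `(1 + (1 + β) ^ 4) * C * r j₀` around `x` and contains the open cube of radius
`r j₀ / C` around its own center. These open cubes are disjoint, so comparing volumes bounds
their number by `((1 + (1 + β) ^ 4) * C ^ 2) ^ d`.
-/

/-- The closed cube with center `c` and diameter `2 * r` in the sup-metric sense:
`r` is half of the side length. -/
def cube {d : ℕ} (c : EuclideanSpace ℝ (Fin d)) (r : ℝ) : Set (EuclideanSpace ℝ (Fin d)) :=
  {x | ∀ i : Fin d, |x i - c i| ≤ r}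

theorem encard_mul_le_measure_of_pairwiseDisjoint {ι α : Type*} [MeasurableSpace α]
    {μ : Measure α} {S : Set ι} (hS : S.Countable) {A : ι → Set α} {B : Set α} {m : ℝ≥0∞}
    (hmeas : ∀ j ∈ S, MeasurableSet (A j)) (hdisj : S.PairwiseDisjoint A)
    (hsub : ∀ j ∈ S, A j ⊆ B) (hle : ∀ j ∈ S, m ≤ μ (A j)) :
    (S.encard : ℝ≥0∞) * m ≤ μ B :=
  calc (S.encard : ℝ≥0∞) * m = ∑' _ : S, m := (ENNReal.tsum_const m).symm
    _ ≤ ∑' j : S, μ (A j) := ENNReal.tsum_le_tsum fun j => hle j j.2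
    _ = μ (⋃ j ∈ S, A j) := (measure_biUnion hS hdisj hmeas).symm
    _ ≤ μ B := measure_mono (iUnion₂_subset hsub)

section Cube

variable {d : ℕ}

theorem cube_mono {c : EuclideanSpace ℝ (Fin d)} {r s : ℝ} (h : r ≤ s) : cube c r ⊆ cube c s :=
  fun _ hy i => (hy i).trans h

theorem cube_subset_cube_of_mem {c x : EuclideanSpace ℝ (Fin d)} {r s : ℝ} (hx : x ∈ cube c s) :
    cube c r ⊆ cube x (s + r) := by
  intro y hy i
  calc |y i - x i| ≤ |y i - c i| + |c i - x i| := abs_sub_le _ _ _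
    _ = |x i - c i| + |y i - c i| := by rw [abs_sub_comm (c i), add_comm]
    _ ≤ s + r := add_le_add (hx i) (hy i)

theorem cube_eq_preimage_closedBall {c : EuclideanSpace ℝ (Fin d)} {r : ℝ} (hr : 0 ≤ r) :
    cube c r = WithLp.ofLp ⁻¹' Metric.closedBall (WithLp.ofLp c) r := by
  ext x
  simp only [cube, mem_ofPred_eq, mem_preimage, Metric.mem_closedBall, dist_pi_le_iff hr,
    Real.dist_eq]

theorem volume_cube {c : EuclideanSpace ℝ (Fin d)} {r : ℝ} (hr : 0 ≤ r) :
    volume (cube c r) = ENNReal.ofReal ((2 * r) ^ d) := by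
  rw [cube_eq_preimage_closedBall hr, (PiLp.volume_preserving_ofLp (ι := Fin d)).measure_preimage
    measurableSet_closedBall.nullMeasurableSet, Real.volume_pi_closedBall _ hr, Fintype.card_fin]

theorem volume_preimage_ball (c : EuclideanSpace ℝ (Fin d)) {ρ : ℝ} (hρ : 0 < ρ) :
    volume (WithLp.ofLp (p := 2) ⁻¹' Metric.ball (WithLp.ofLp c) ρ) =
      ENNReal.ofReal ((2 * ρ) ^ d) := by
  rw [(PiLp.volume_preserving_ofLp (ι := Fin d)).measure_preimage
    Metric.isOpen_ball.nullMeasurableSet, Real.volume_pi_ball _ hρ, Fintype.card_fin]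

theorem preimage_ball_subset_interior_cube {c : EuclideanSpace ℝ (Fin d)} {ρ r : ℝ} (h : ρ ≤ r) :
    WithLp.ofLp (p := 2) ⁻¹' Metric.ball (WithLp.ofLp c) ρ ⊆ interior (cube c r) :=
  interior_maximal (fun x hx i => by
      simpa only [Real.dist_eq] using ((dist_le_pi_dist _ _ i).trans_lt hx).le.trans h)
    (Metric.isOpen_ball.preimage (PiLp.continuous_ofLp 2 _))

theorem finite_and_ncard_le_of_pairwiseDisjoint_interior_cube {ι : Type*}
    {S : Set ι} (hS : S.Countable) {c : ι → EuclideanSpace ℝ (Fin d)} {r : ι → ℝ}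
    {x : EuclideanSpace ℝ (Fin d)} {ρ R : ℝ} (hρ : 0 < ρ) (hR : 0 ≤ R)
    (hdisj : S.PairwiseDisjoint fun j => interior (cube (c j) (r j)))
    (hρr : ∀ j ∈ S, ρ ≤ r j) (hsub : ∀ j ∈ S, cube (c j) (r j) ⊆ cube x R) :
    S.Finite ∧ (S.ncard : ℝ) ≤ (R / ρ) ^ d := by
  set A := fun j => WithLp.ofLp (p := 2) ⁻¹' Metric.ball (WithLp.ofLp (c j)) ρ
  have hA : ∀ j ∈ S, A j ⊆ interior (cube (c j) (r j)) :=
    fun j hj => preimage_ball_subset_interior_cube (hρr j hj)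
  have hpack : (S.encard : ℝ≥0∞) * ENNReal.ofReal ((2 * ρ) ^ d)
      ≤ ENNReal.ofReal ((2 * R) ^ d) := by
    rw [← volume_cube (c := x) hR]
    refine encard_mul_le_measure_of_pairwiseDisjoint hS
      (fun j _ => Metric.isOpen_ball.measurableSet.preimage (WithLp.measurable_ofLp 2 _))
      (hdisj.mono_on hA) (fun j hj => (hA j hj).trans (interior_subset.trans (hsub j hj)))
      (fun j _ => (volume_preimage_ball (c j) hρ).ge)
  have hvol_pos : ENNReal.ofReal ((2 * ρ) ^ d) ≠ 0 := by positivity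
  have hfin : S.Finite := by
    rw [← encard_ne_top_iff]
    rintro htop
    simp [htop, ENNReal.top_mul hvol_pos] at hpack
  refine ⟨hfin, ?_⟩
  rw [← hfin.cast_ncard_eq, ENat.toENNReal_coe, ← ENNReal.ofReal_natCast,
    ← ENNReal.ofReal_mul (Nat.cast_nonneg _), ENNReal.ofReal_le_ofReal_iff (by positivity)] at hpack
  calc (S.ncard : ℝ) ≤ (2 * R) ^ d / (2 * ρ) ^ d := (le_div_iff₀ (by positivity)).2 hpack
    _ = (R / ρ) ^ d := by rw [← div_pow, mul_div_mul_left _ _ two_ne_zero]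

end Cube

theorem dilated_cubes_bounded_overlap_general (d : ℕ)
    (c : ℕ → EuclideanSpace ℝ (Fin d)) (r : ℕ → ℝ) (hr : ∀ j, 0 < r j)
    (β C : ℝ) (hC : 0 < C)
    (hdisj : ∀ i j, i ≠ j →
      Disjoint (interior (cube (c i) (r i))) (interior (cube (c j) (r j))))
    (hcomp : ∀ i j,
      ((cube (c i) ((1 + β) ^ 4 * r i)) ∩ (cube (c j) ((1 + β) ^ 4 * r j))).Nonempty →
      r i ≤ C * r j) :
    ∃ C' : ℕ, ∀ x : EuclideanSpace ℝ (Fin d),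
      ({j : ℕ | x ∈ cube (c j) ((1 + β) ^ 4 * r j)}).Finite ∧
      ({j : ℕ | x ∈ cube (c j) ((1 + β) ^ 4 * r j)}).ncard ≤ C' := by
  refine ⟨⌈((1 + (1 + β) ^ 4) * C ^ 2) ^ d⌉₊, fun x => ?_⟩
  set S := {j : ℕ | x ∈ cube (c j) ((1 + β) ^ 4 * r j)}
  obtain hS | ⟨j₀, hj₀⟩ := S.eq_empty_or_nonempty
  · simp [hS]
  have hcomp_S : ∀ j ∈ S, ∀ k ∈ S, r j ≤ C * r k := fun j hj k hk => hcomp j k ⟨x, hj, hk⟩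
  have hr₀ := hr j₀
  have hlower : ∀ j ∈ S, r j₀ / C ≤ r j := fun j hj =>
    (div_le_iff₀ hC).2 (by linarith [hcomp_S j₀ hj₀ j hj])
  have hsub : ∀ j ∈ S, cube (c j) (r j) ⊆ cube x ((1 + (1 + β) ^ 4) * (C * r j₀)) :=
    fun j hj => (cube_subset_cube_of_mem hj).trans <| cube_mono <| by
      linarith [mul_le_mul_of_nonneg_left (hcomp_S j hj j₀ hj₀)
        (by positivity : (0 : ℝ) ≤ 1 + (1 + β) ^ 4)]
  obtain ⟨hfin, hcard⟩ := finite_and_ncard_le_of_pairwiseDisjoint_interior_cube S.to_countable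
    (by positivity) (by positivity) (fun i _ j _ hij => hdisj i j hij) hlower hsub
  refine ⟨hfin, Nat.cast_le.1 ((hcard.trans_eq ?_).trans (Nat.le_ceil _))⟩
  field_simp

theorem dilated_cubes_bounded_overlap (d : ℕ) (hd : 1 ≤ d)
    (c : ℕ → EuclideanSpace ℝ (Fin d)) (r : ℕ → ℝ) (hr : ∀ j, 0 < r j)
    (β C : ℝ) (hβ : 0 < β) (hC : 0 < C)
    (hdisj : ∀ i j, i ≠ j →
      Disjoint (interior (cube (c i) (r i))) (interior (cube (c j) (r j))))
    (hdense : closure (⋃ j, cube (c j) (r j)) = Set.univ)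
    (hcomp : ∀ i j,
      ((cube (c i) ((1 + β) ^ 4 * r i)) ∩ (cube (c j) ((1 + β) ^ 4 * r j))).Nonempty →
      r i ≤ C * r j) :
    ∃ C' : ℕ, ∀ x : EuclideanSpace ℝ (Fin d),
      ({j : ℕ | x ∈ cube (c j) ((1 + β) ^ 4 * r j)}).Finite ∧
      ({j : ℕ | x ∈ cube (c j) ((1 + β) ^ 4 * r j)}).ncard ≤ C' :=
  dilated_cubes_bounded_overlap_general d c r hr β C hC hdisj hcomp
end

section
/- Let V ∈ L¹_loc(ℝ), V ≥ 0, V ≢ 0. Then there exists a collection Q of dyadic intervals of ℝ with pairwise disjoint interiors covering ℝ up to measure zero such that each Q ∈ Q is a maximal dyadic interval satisfying |Q| ∫_{16Q} V(y) dy ≤ 1. -/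
/-!
Since `V ≥ 0`, the stopping condition passes from a dyadic interval to all dyadic intervals it
contains. Along the chain of dyadic intervals containing a point `x` it holds at small scales
(local integrability) and fails at large scales (`V` is not a.e. zero), so there is a largest
stopping interval containing `x`, and it is maximal. Two dyadic intervals whose interiors meet are
nested, so two maximal stopping intervals whose interiors meet coincide.
-/

open MeasureTheory Real Set

/-- The dyadic interval `[k 2^n, (k+1) 2^n]`. -/
def dyadicI (k n : ℤ) : Set ℝ := Icc ((k : ℝ) * 2 ^ n) (((k : ℝ) + 1) * 2 ^ n)

/-- The interval `16 Q`: same center as `dyadicI k n`, sixteen times the length. -/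
def bigI (k n : ℤ) : Set ℝ :=
  Icc (((k : ℝ) + 1 / 2) * 2 ^ n - 8 * 2 ^ n) (((k : ℝ) + 1 / 2) * 2 ^ n + 8 * 2 ^ n)

/-- The stopping-time condition `|Q| ∫_{16Q} V ≤ 1` for `Q = dyadicI k n`. -/
def stopCond (V : ℝ → ℝ) (k n : ℤ) : Prop :=
  (2 : ℝ) ^ n * ∫ y in bigI k n, V y ≤ 1

lemma dyadicI_subset_dyadicI_iff {k n k' n' : ℤ} :
    dyadicI k n ⊆ dyadicI k' n' ↔
      (k' : ℝ) * 2 ^ n' ≤ k * 2 ^ n ∧ ((k : ℝ) + 1) * 2 ^ n ≤ (k' + 1) * 2 ^ n' :=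
  Icc_subset_Icc_iff (mul_le_mul_of_nonneg_right (by linarith) (by positivity))

lemma le_of_dyadicI_subset {k n k' n' : ℤ} (h : dyadicI k n ⊆ dyadicI k' n') : n ≤ n' := by
  obtain ⟨hl, hr⟩ := dyadicI_subset_dyadicI_iff.mp h
  have hlen : (2 : ℝ) ^ n ≤ 2 ^ n' := by linarith
  exact (zpow_le_zpow_iff_right₀ one_lt_two).mp hlen

lemma mem_dyadicI_floor (x : ℝ) (n : ℤ) : x ∈ dyadicI ⌊x / 2 ^ n⌋ n := by
  have h2n : (0 : ℝ) < 2 ^ n := by positivity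
  constructor
  · rw [← le_div_iff₀ h2n]
    exact Int.floor_le _
  · rw [← div_le_iff₀ h2n]
    exact (Int.lt_floor_add_one _).le

lemma floor_div_eq_of_mem_interior_dyadicI {y : ℝ} {k n : ℤ}
    (hy : y ∈ interior (dyadicI k n)) : ⌊y / 2 ^ n⌋ = k := by
  have h2n : (0 : ℝ) < 2 ^ n := by positivity
  rw [dyadicI, interior_Icc] at hy
  rw [Int.floor_eq_iff, le_div_iff₀ h2n, div_lt_iff₀ h2n]
  exact ⟨hy.1.le, hy.2⟩

lemma interior_dyadicI_nonempty (k n : ℤ) : (interior (dyadicI k n)).Nonempty := by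
  rw [dyadicI, interior_Icc, nonempty_Ioo]
  exact mul_lt_mul_of_pos_right (by linarith) (by positivity)

lemma dyadicI_floor_subset_of_le (x : ℝ) {n m : ℤ} (hnm : n ≤ m) :
    dyadicI ⌊x / 2 ^ n⌋ n ⊆ dyadicI ⌊x / 2 ^ m⌋ m := by
  obtain ⟨d, rfl⟩ := Int.le.dest hnm
  have hpow : (2 : ℝ) ^ (n + d) = 2 ^ d * 2 ^ n := by
    rw [zpow_add₀ two_ne_zero, zpow_natCast, mul_comm]
  have hdiv : x / 2 ^ (n + d) = x / 2 ^ n / 2 ^ d := by rw [hpow, div_div, mul_comm]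
  have hxl := Int.floor_le (x / 2 ^ (n + d))
  have hxr := Int.lt_floor_add_one (x / 2 ^ (n + d))
  generalize ⌊x / 2 ^ (n + d)⌋ = a at hxl hxr ⊢
  rw [hdiv, le_div_iff₀ (by positivity)] at hxl
  rw [hdiv, div_lt_iff₀ (by positivity)] at hxr
  have hlow : a * 2 ^ d ≤ ⌊x / 2 ^ n⌋ := Int.le_floor.mpr (by push_cast; exact hxl)
  have hup : ⌊x / 2 ^ n⌋ < (a + 1) * 2 ^ d :=
    Int.floor_lt.mpr (by push_cast; exact hxr)
  have hlow' : (a : ℝ) * 2 ^ d ≤ ⌊x / 2 ^ n⌋ := by exact_mod_cast hlow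
  have hup' : (⌊x / 2 ^ n⌋ : ℝ) + 1 ≤ (a + 1) * 2 ^ d := by
    exact_mod_cast Int.add_one_le_of_lt hup
  rw [dyadicI_subset_dyadicI_iff, hpow, ← mul_assoc, ← mul_assoc]
  exact ⟨by gcongr, by gcongr⟩

lemma eq_of_dyadicI_subset_of_subset {k n k' k'' m : ℤ} (h : dyadicI k n ⊆ dyadicI k' m)
    (h' : dyadicI k n ⊆ dyadicI k'' m) : k' = k'' := by
  obtain ⟨y, hy⟩ := interior_dyadicI_nonempty k n
  rw [← floor_div_eq_of_mem_interior_dyadicI (interior_mono h hy),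
    ← floor_div_eq_of_mem_interior_dyadicI (interior_mono h' hy)]

lemma eq_and_eq_of_dyadicI_eq {k n k' n' : ℤ} (h : dyadicI k n = dyadicI k' n') :
    k = k' ∧ n = n' := by
  obtain rfl : n = n' := le_antisymm (le_of_dyadicI_subset h.le) (le_of_dyadicI_subset h.ge)
  exact ⟨eq_of_dyadicI_subset_of_subset subset_rfl h.le, rfl⟩

lemma dyadicI_subset_of_le_of_not_disjoint {k n k' n' : ℤ} (hn : n ≤ n')
    (h : ¬Disjoint (interior (dyadicI k n)) (interior (dyadicI k' n'))) :
    dyadicI k n ⊆ dyadicI k' n' := by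
  obtain ⟨y, hy, hy'⟩ := not_disjoint_iff.mp h
  rw [← floor_div_eq_of_mem_interior_dyadicI hy, ← floor_div_eq_of_mem_interior_dyadicI hy']
  exact dyadicI_floor_subset_of_le y hn

lemma bigI_subset_bigI {k n k' n' : ℤ} (h : dyadicI k n ⊆ dyadicI k' n') :
    bigI k n ⊆ bigI k' n' := by
  obtain ⟨hl, hr⟩ := dyadicI_subset_dyadicI_iff.mp h
  have hlen : (2 : ℝ) ^ n ≤ 2 ^ n' := by linarith
  exact Icc_subset_Icc (by linarith) (by linarith)

lemma closedBall_subset_bigI {x : ℝ} {k n : ℤ} (hx : x ∈ dyadicI k n) :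
    Metric.closedBall x (7 * 2 ^ n) ⊆ bigI k n := by
  have h2n : (0 : ℝ) < 2 ^ n := by positivity
  rw [Real.closedBall_eq_Icc]
  exact Icc_subset_Icc (by linarith [hx.1, hx.2]) (by linarith [hx.1, hx.2])

lemma bigI_subset_closedBall {x : ℝ} {k n : ℤ} (hx : x ∈ dyadicI k n) :
    bigI k n ⊆ Metric.closedBall x (9 * 2 ^ n) := by
  have h2n : (0 : ℝ) < 2 ^ n := by positivity
  rw [Real.closedBall_eq_Icc]
  exact Icc_subset_Icc (by linarith [hx.1, hx.2]) (by linarith [hx.1, hx.2])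

lemma setIntegral_mono_set_of_isCompact {X : Type*} [MeasurableSpace X] [TopologicalSpace X]
    {μ : Measure X} {f : X → ℝ} (hf : LocallyIntegrable f μ) (hf0 : ∀ x, 0 ≤ f x)
    {s t : Set X} (ht : IsCompact t) (hst : s ⊆ t) :
    ∫ x in s, f x ∂μ ≤ ∫ x in t, f x ∂μ :=
  setIntegral_mono_set (hf.integrableOn_isCompact ht) (ae_of_all _ fun x => hf0 x)
    hst.eventuallyLE

lemma exists_pos_setIntegral_closedBall {X : Type*} [PseudoMetricSpace X] [ProperSpace X]
    [MeasurableSpace X] [OpensMeasurableSpace X] {μ : Measure X} {f : X → ℝ}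
    (hf : LocallyIntegrable f μ) (hf0 : ∀ x, 0 ≤ f x) (hne : ¬∀ᵐ x ∂μ, f x = 0)
    (x₀ : X) :
    ∃ R : ℕ, 0 < ∫ x in Metric.closedBall x₀ R, f x ∂μ := by
  by_contra! h
  have hzero (R : ℕ) : ∀ᵐ x ∂μ.restrict (Metric.closedBall x₀ R), f x = 0 :=
    (setIntegral_eq_zero_iff_of_nonneg_ae (ae_of_all _ hf0)
      (hf.integrableOn_isCompact (isCompact_closedBall x₀ R))).mp
      (le_antisymm (h R) (setIntegral_nonneg Metric.isClosed_closedBall.measurableSet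
        fun x _ => hf0 x))
  apply hne
  rw [← Measure.restrict_univ (μ := μ), ← Metric.iUnion_closedBall_nat x₀]
  exact (ae_restrict_iUnion_iff _ _).mpr hzero

def IsMaximalStoppingInterval (V : ℝ → ℝ) (k n : ℤ) : Prop :=
  stopCond V k n ∧ ∀ k' n' : ℤ, dyadicI k n ⊆ dyadicI k' n' → stopCond V k' n' →
    dyadicI k' n' = dyadicI k n

section

variable {V : ℝ → ℝ}

lemma stopCond_of_dyadicI_subset (hVloc : LocallyIntegrable V volume)
    (hV0 : ∀ x, 0 ≤ V x) {k n k' n' : ℤ} (h : dyadicI k n ⊆ dyadicI k' n')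
    (hs : stopCond V k' n') : stopCond V k n :=
  calc (2 : ℝ) ^ n * ∫ y in bigI k n, V y ≤ 2 ^ n' * ∫ y in bigI k' n', V y :=
        mul_le_mul (zpow_le_zpow_right₀ one_le_two (le_of_dyadicI_subset h))
          (setIntegral_mono_set_of_isCompact hVloc hV0 isCompact_Icc (bigI_subset_bigI h))
          (setIntegral_nonneg measurableSet_Icc fun y _ => hV0 y) (by positivity)
    _ ≤ 1 := hs

lemma exists_not_stopCond_floor (hVloc : LocallyIntegrable V volume)
    (hV0 : ∀ x, 0 ≤ V x) (hVne : ¬∀ᵐ x : ℝ ∂volume, V x = 0) (x : ℝ) :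
    ∃ N : ℤ, ¬stopCond V ⌊x / 2 ^ N⌋ N := by
  obtain ⟨R, hR⟩ := exists_pos_setIntegral_closedBall hVloc hV0 hVne 0
  set c := ∫ y in Metric.closedBall 0 (R : ℝ), V y
  obtain ⟨m, hm⟩ := pow_unbounded_of_one_lt (max (R + |x|) c⁻¹) one_lt_two
  rw [← zpow_natCast] at hm
  obtain ⟨hmR, hminv⟩ := max_lt_iff.mp hm
  have h2m : (0 : ℝ) < 2 ^ (m : ℤ) := by positivity
  refine ⟨m, fun hstop => ?_⟩
  have hball : Metric.closedBall 0 (R : ℝ) ⊆ bigI ⌊x / 2 ^ (m : ℤ)⌋ m :=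
    (Metric.closedBall_subset_closedBall' (by rw [Real.dist_eq, zero_sub, abs_neg]; linarith)).trans
      (closedBall_subset_bigI (mem_dyadicI_floor x m))
  have hc : c ≤ ∫ y in bigI ⌊x / 2 ^ (m : ℤ)⌋ m, V y :=
    setIntegral_mono_set_of_isCompact hVloc hV0 isCompact_Icc hball
  have hmc : 1 < 2 ^ (m : ℤ) * c := (inv_lt_iff_one_lt_mul₀ hR).mp hminv
  have : 2 ^ (m : ℤ) * c ≤ 1 := (mul_le_mul_of_nonneg_left hc h2m.le).trans hstop
  linarith

lemma exists_stopCond_floor (hVloc : LocallyIntegrable V volume)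
    (hV0 : ∀ x, 0 ≤ V x) (x : ℝ) : ∃ n : ℤ, stopCond V ⌊x / 2 ^ n⌋ n := by
  obtain ⟨m, hm⟩ := pow_unbounded_of_one_lt (∫ y in Metric.closedBall x 9, V y) one_lt_two
  refine ⟨-m, ?_⟩
  have hscale : (2 : ℝ) ^ (-(m : ℤ)) ≤ 1 := zpow_le_one_of_nonpos₀ one_le_two (by omega)
  have hball : bigI ⌊x / 2 ^ (-(m : ℤ))⌋ (-m) ⊆ Metric.closedBall x 9 :=
    (bigI_subset_closedBall (mem_dyadicI_floor x _)).trans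
      (Metric.closedBall_subset_closedBall (by linarith))
  rw [← zpow_natCast] at hm
  calc (2 : ℝ) ^ (-(m : ℤ)) * ∫ y in bigI ⌊x / 2 ^ (-(m : ℤ))⌋ (-m), V y
      ≤ 2 ^ (-(m : ℤ)) * 2 ^ (m : ℤ) := by
        gcongr
        exact (setIntegral_mono_set_of_isCompact hVloc hV0 (isCompact_closedBall x 9) hball).trans
          hm.le
    _ = 1 := by rw [← zpow_add₀ two_ne_zero, neg_add_cancel, zpow_zero]

lemma exists_mem_dyadicI_isMaximalStoppingInterval (hVloc : LocallyIntegrable V volume)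
    (hV0 : ∀ x, 0 ≤ V x) (hVne : ¬∀ᵐ x : ℝ ∂volume, V x = 0) (x : ℝ) :
    ∃ k n : ℤ, x ∈ dyadicI k n ∧ IsMaximalStoppingInterval V k n := by
  obtain ⟨N, hN⟩ := exists_not_stopCond_floor hVloc hV0 hVne x
  have hbdd (n : ℤ) (hn : stopCond V ⌊x / 2 ^ n⌋ n) : n ≤ N := by
    by_contra! hNn
    exact hN (stopCond_of_dyadicI_subset hVloc hV0 (dyadicI_floor_subset_of_le x hNn.le) hn)
  obtain ⟨n₀, hstop, hgreatest⟩ :=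
    Int.exists_greatest_of_bdd ⟨N, hbdd⟩ (exists_stopCond_floor hVloc hV0 x)
  refine ⟨_, n₀, mem_dyadicI_floor x n₀, hstop, fun k' n' hsub hs => ?_⟩
  have hle := le_of_dyadicI_subset hsub
  obtain rfl : ⌊x / 2 ^ n'⌋ = k' :=
    eq_of_dyadicI_subset_of_subset (dyadicI_floor_subset_of_le x hle) hsub
  rw [le_antisymm (hgreatest n' hs) hle]

lemma IsMaximalStoppingInterval.eq_of_not_disjoint {k n k' n' : ℤ}
    (h : IsMaximalStoppingInterval V k n) (h' : IsMaximalStoppingInterval V k' n')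
    (hint : ¬Disjoint (interior (dyadicI k n)) (interior (dyadicI k' n'))) :
    (k, n) = (k', n') := by
  rcases le_total n n' with hle | hle
  · obtain ⟨rfl, rfl⟩ :=
      eq_and_eq_of_dyadicI_eq (h.2 k' n' (dyadicI_subset_of_le_of_not_disjoint hle hint) h'.1)
    rfl
  · obtain ⟨rfl, rfl⟩ := eq_and_eq_of_dyadicI_eq
      (h'.2 k n (dyadicI_subset_of_le_of_not_disjoint hle (disjoint_comm.not.mp hint)) h.1)
    rfl

end

theorem exists_maximal_dyadic_stopping_cover
    (V : ℝ → ℝ) (hVloc : LocallyIntegrable V volume) (hV0 : ∀ x, 0 ≤ V x)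
    (hVne : ¬ (∀ᵐ x : ℝ ∂volume, V x = 0)) :
    ∃ S : Set (ℤ × ℤ),
      (∀ p ∈ S, ∀ q ∈ S, p ≠ q →
        Disjoint (interior (dyadicI p.1 p.2)) (interior (dyadicI q.1 q.2))) ∧
      volume (Set.univ \ ⋃ p ∈ S, dyadicI p.1 p.2) = 0 ∧
      ∀ p ∈ S, stopCond V p.1 p.2 ∧
        ∀ k' n' : ℤ, dyadicI p.1 p.2 ⊆ dyadicI k' n' → stopCond V k' n' →
          dyadicI k' n' = dyadicI p.1 p.2 := by
  set S := {p : ℤ × ℤ | IsMaximalStoppingInterval V p.1 p.2}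
  have hcover : ⋃ p ∈ S, dyadicI p.1 p.2 = univ := by
    refine eq_univ_of_forall fun x => ?_
    obtain ⟨k, n, hx, hmax⟩ := exists_mem_dyadicI_isMaximalStoppingInterval hVloc hV0 hVne x
    exact mem_iUnion₂.mpr ⟨(k, n), hmax, hx⟩
  refine ⟨S, fun p hp q hq hpq => ?_, by rw [hcover, sdiff_self, measure_empty], fun p hp => hp⟩
  by_contra hint
  exact hpq (hp.eq_of_not_disjoint hq hint)
end
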